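/- (Proposition 4(c)) Let ℓ be a nonisotropic cycle with ⟨ℓ, p⟩ = 0, let u, v be two distinct points of H with ⟨ℓ, q(u)⟩ = ⟨ℓ, q(v)⟩ = 0, and let T : F → F be a linear map preserving the cycle pairing with T(p) = p, T(q(u)) = q(u) and T(q(v)) = q(v). Then T fixes every point of the line defined by ℓ: for every w ∈ H with ⟨ℓ, q(w)⟩ = 0, T(q(w)) = q(w). -/

import Mathlib

/-!
The cycles orthogonal to `ℓ` form the kernel of the nonzero functional `⟨ℓ, ·⟩` on the
4-dimensional space `F`, a hyperplane containing `p`, `q(u)` and `q(v)`. These three are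
linearly independent: a dependence forces `B(u,u) = B(v,v)` and `u - v ∥ i`, so `u` would be
the reflection of `v` in the boundary of `H`, which changes the sign of `B(i, ·)`. Hence they span
the hyperplane, `q(w)` is a combination of them, and `T` fixes it by linearity.
-/

variable {K : Type*} [Field K] [LinearOrder K] [IsStrictOrderedRing K]
variable {E : Type*} [AddCommGroup E] [Module K E]

/-- The cycle pairing on the space of cycles `F = K × E × K`:
`⟨(a,b,c),(a',b',c')⟩ = B(b,b') − 2ac' − 2a'c`. -/
def cyc (B : LinearMap.BilinForm K E) (f g : K × E × K) : K :=
  B f.2.1 g.2.1 - 2 * f.1 * g.2.2 - 2 * g.1 * f.2.2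

/-- The normalized zero circle centered at `u`: the cycle `(1, −2u, B(u,u))`. -/
def qc (B : LinearMap.BilinForm K E) (u : E) : K × E × K :=
  (1, (-2 : K) • u, B u u)

open Module Submodule

section

variable {𝕜 V : Type*} [Field 𝕜] [AddCommGroup V] [Module 𝕜 V]

theorem span_eq_ker_of_linearIndependent [FiniteDimensional 𝕜 V] {n : ℕ} {φ : Dual 𝕜 V}
    (hφ : φ ≠ 0) {x : Fin n → V} (hx : LinearIndependent 𝕜 x) (hn : n + 1 = finrank 𝕜 V)
    (hker : ∀ k, φ (x k) = 0) :
    span 𝕜 (Set.range x) = LinearMap.ker φ := by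
  refine eq_of_le_of_finrank_eq (span_le.mpr ?_) ?_
  · rintro _ ⟨k, rfl⟩
    exact hker k
  · have := Dual.finrank_ker_add_one_of_ne_zero hφ
    rw [finrank_span_eq_card hx, Fintype.card_fin]
    omega

theorem finrank_prod_prod_self [Module.Finite 𝕜 V] :
    finrank 𝕜 (𝕜 × V × 𝕜) = finrank 𝕜 V + 2 := by
  rw [finrank_prod, finrank_prod, finrank_self]
  ring

def cycForm (B : LinearMap.BilinForm 𝕜 V) : LinearMap.BilinForm 𝕜 (𝕜 × V × 𝕜) :=
  LinearMap.mk₂ 𝕜 (cyc B)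
    (fun f f' g => by
      simp only [cyc, Prod.fst_add, Prod.snd_add, map_add, LinearMap.add_apply]; ring)
    (fun a f g => by
      simp only [cyc, Prod.smul_fst, Prod.smul_snd, map_smul, LinearMap.smul_apply, smul_eq_mul]
      ring)
    (fun f g g' => by simp only [cyc, Prod.fst_add, Prod.snd_add, map_add]; ring)
    (fun a f g => by simp only [cyc, Prod.smul_fst, Prod.smul_snd, map_smul, smul_eq_mul]; ring)

end

theorem eq_zero_of_apply_add_smul_self_eq {B : LinearMap.BilinForm K E}
    (hsymm : ∀ x y : E, B x y = B y x) {i v : E} (hi : B i i = 1) {t : K}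
    (hv : B i v < 0) (hvt : B i (v + t • i) < 0)
    (h : B (v + t • i) (v + t • i) = B v v) : t = 0 := by
  simp only [map_add, map_smul, LinearMap.add_apply, LinearMap.smul_apply, smul_eq_mul, hi,
    hsymm v i] at h hvt
  have : t * (t + 2 * B i v) = 0 := by linear_combination h
  rcases mul_eq_zero.mp this with ht | ht
  · exact ht
  · linarith

theorem linearIndependent_p_qc_qc {B : LinearMap.BilinForm K E}
    (hsymm : ∀ x y : E, B x y = B y x) {i u v : E} (hi : B i i = 1)
    (hu : B i u < 0) (hv : B i v < 0) (huv : u ≠ v) :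
    LinearIndependent K ![((0 : K), i, (0 : K)), qc B u, qc B v] := by
  rw [Fintype.linearIndependent_iff]
  intro g hg
  simp only [Fin.sum_univ_three, qc, Matrix.cons_val, Prod.smul_mk, Prod.mk_add_mk,
    Prod.mk_eq_zero, smul_eq_mul] at hg
  obtain ⟨h1, h2, h3⟩ := hg
  have hγ : g 2 = -g 1 := by linear_combination h1
  have hβ : g 1 = 0 := by
    by_contra hβ
    have hnorm : B u u = B v v :=
      mul_left_cancel₀ hβ (by linear_combination h3 - (B v v) * hγ)
    have hdiff : u = v + (g 0 / (2 * g 1)) • i := by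
      have h2g : 2 * g 1 ≠ 0 := mul_ne_zero two_ne_zero hβ
      rw [hγ] at h2
      apply smul_right_injective E h2g
      simp only
      rw [smul_add, smul_smul, mul_div_cancel₀ _ h2g]
      linear_combination (norm := module) -h2
    have ht := eq_zero_of_apply_add_smul_self_eq hsymm hi hv (hdiff ▸ hu) (hdiff ▸ hnorm)
    exact huv (by rw [hdiff, ht, zero_smul, add_zero])
  have hα : g 0 • i = 0 := by
    rw [hγ, hβ] at h2
    simpa using h2
  have hi0 : i ≠ 0 := by
    rintro rfl
    simp at hi
  intro k
  fin_cases k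
  · exact (smul_eq_zero.mp hα).resolve_right hi0
  · exact hβ
  · simpa [hβ] using hγ

theorem prop4c_fixes_line_general
    (B : LinearMap.BilinForm K E)
    (hdim : Module.finrank K E = 2)
    (hsymm : ∀ x y : E, B x y = B y x)
    (i : E) (hi : B i i = 1)
    (l : K × E × K) (hl : cyc B l l ≠ 0)
    (hlp : cyc B l ((0 : K), i, (0 : K)) = 0)
    (u v : E) (hu : B i u < 0) (hv : B i v < 0) (huv : u ≠ v)
    (hlu : cyc B l (qc B u) = 0) (hlv : cyc B l (qc B v) = 0)
    (T : (K × E × K) →ₗ[K] (K × E × K))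
    (hTp : T ((0 : K), i, (0 : K)) = ((0 : K), i, (0 : K)))
    (hTu : T (qc B u) = qc B u) (hTv : T (qc B v) = qc B v) :
    ∀ w : E, B i w < 0 → cyc B l (qc B w) = 0 → T (qc B w) = qc B w := by
  intro w _ hlw
  have : FiniteDimensional K E := Module.finite_of_finrank_eq_succ hdim
  have hspan := span_eq_ker_of_linearIndependent (φ := cycForm B l)
    (fun h => hl (LinearMap.congr_fun h l)) (linearIndependent_p_qc_qc hsymm hi hu hv huv)
    (by rw [finrank_prod_prod_self, hdim]) (by intro k; fin_cases k; exacts [hlp, hlu, hlv])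
  have hw : qc B w ∈ span K (Set.range ![((0 : K), i, (0 : K)), qc B u, qc B v]) :=
    hspan ▸ hlw
  refine LinearMap.eqOn_span (g := LinearMap.id) ?_ hw
  rintro _ ⟨k, rfl⟩
  fin_cases k
  exacts [hTp, hTu, hTv]

/-- Proposition 4(c): an orthogonal transformation of `F` fixing `p` and two distinct
points of a line fixes every point of that line. -/
theorem prop4c_fixes_line
    (B : LinearMap.BilinForm K E)
    (heuc : ∀ x : K, 0 ≤ x → ∃ y : K, y * y = x)
    (hdim : Module.finrank K E = 2)
    (hsymm : ∀ x y : E, B x y = B y x)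
    (hpos : ∀ x : E, x ≠ 0 → 0 < B x x)
    (i : E) (hi : B i i = 1)
    (l : K × E × K) (hl : cyc B l l ≠ 0)
    (hlp : cyc B l ((0 : K), i, (0 : K)) = 0)
    (u v : E) (hu : B i u < 0) (hv : B i v < 0) (huv : u ≠ v)
    (hlu : cyc B l (qc B u) = 0) (hlv : cyc B l (qc B v) = 0)
    (T : (K × E × K) →ₗ[K] (K × E × K))
    (hT : ∀ x y : K × E × K, cyc B (T x) (T y) = cyc B x y)
    (hTp : T ((0 : K), i, (0 : K)) = ((0 : K), i, (0 : K)))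
    (hTu : T (qc B u) = qc B u) (hTv : T (qc B v) = qc B v) :
    ∀ w : E, B i w < 0 → cyc B l (qc B w) = 0 → T (qc B w) = qc B w :=
  prop4c_fixes_line_general B hdim hsymm i hi l hl hlp u v hu hv huv hlu hlv T hTp hTu hTv
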